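/- Let B be a nonempty countable set of pairwise Turing-incomparable Turing degrees. Then there exist equivalence relations R and S on ℕ such that Spec⇒(R,S) = {d : ∃ b ∈ B, b ≤ d}; that is, every upward closed collection of Turing degrees with a countable basis is realised as a reducibility spectrum. -/

import Mathlib

/-- `RecursiveInO O f` means the partial function `f` is partial recursive in the
(total) oracle `O`. -/
inductive RecursiveInO (O : ℕ → ℕ) : (ℕ →. ℕ) → Prop
  | zero : RecursiveInO O (pure 0)
  | succ : RecursiveInO O Nat.succ
  | left : RecursiveInO O ↑fun n : ℕ => n.unpair.1
  | right : RecursiveInO O ↑fun n : ℕ => n.unpair.2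
  | oracle : RecursiveInO O ↑O
  | pair {f g} : RecursiveInO O f → RecursiveInO O g →
      RecursiveInO O fun n => Nat.pair <$> f n <*> g n
  | comp {f g} : RecursiveInO O f → RecursiveInO O g →
      RecursiveInO O fun n => g n >>= f
  | prec {f g} : RecursiveInO O f → RecursiveInO O g →
      RecursiveInO O (Nat.unpaired fun a n =>
        n.rec (f a) fun y IH => do let i ← IH; g (Nat.pair a (Nat.pair y i)))
  | rfind {f} : RecursiveInO O f →
      RecursiveInO O fun a => Nat.rfind fun n => (fun m => m = 0) <$> f (Nat.pair a n)

/-- Turing reducibility between total functions on `ℕ`. -/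
def TuringReducibleF (f g : ℕ → ℕ) : Prop := RecursiveInO g ↑f

/-- Turing equivalence of total functions on `ℕ`. -/
def TuringEquivalentF (f g : ℕ → ℕ) : Prop := TuringReducibleF f g ∧ TuringReducibleF g f

theorem TuringReducibleF.refl (f : ℕ → ℕ) : TuringReducibleF f f := RecursiveInO.oracle

theorem RecursiveInO.trans' {f : ℕ →. ℕ} {g h : ℕ → ℕ}
    (hf : RecursiveInO g f) (hg : TuringReducibleF g h) : RecursiveInO h f := by
  induction hf with
  | zero => exact .zero
  | succ => exact .succ
  | left => exact .left
  | right => exact .right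
  | oracle => exact hg
  | pair _ _ ih₁ ih₂ => exact .pair ih₁ ih₂
  | comp _ _ ih₁ ih₂ => exact .comp ih₁ ih₂
  | prec _ _ ih₁ ih₂ => exact .prec ih₁ ih₂
  | rfind _ ih => exact .rfind ih

theorem TuringReducibleF.trans {f g h : ℕ → ℕ}
    (h₁ : TuringReducibleF f g) (h₂ : TuringReducibleF g h) : TuringReducibleF f h :=
  RecursiveInO.trans' h₁ h₂

/-- The setoid of Turing equivalence. -/
def turingSetoid : Setoid (ℕ → ℕ) :=
  ⟨TuringEquivalentF,
    fun f => ⟨.refl f, .refl f⟩,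
    fun ⟨h₁, h₂⟩ => ⟨h₂, h₁⟩,
    fun ⟨a₁, a₂⟩ ⟨b₁, b₂⟩ => ⟨a₁.trans b₁, b₂.trans a₂⟩⟩

/-- Turing degrees. -/
def TuringDegreeF : Type := Quotient turingSetoid

/-- The Turing degree of a total function. -/
def TuringDegreeF.deg (f : ℕ → ℕ) : TuringDegreeF := Quotient.mk turingSetoid f

instance : LE TuringDegreeF :=
  ⟨fun d₁ d₂ =>
    Quotient.liftOn₂ d₁ d₂ TuringReducibleF
      (fun _ _ _ _ h h' =>
        propext ⟨fun hr => (h.2.trans hr).trans h'.1, fun hr => (h.1.trans hr).trans h'.2⟩)⟩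

instance : LT TuringDegreeF := ⟨fun d₁ d₂ => d₁ ≤ d₂ ∧ ¬d₂ ≤ d₁⟩

/-- The least Turing degree. -/
def TuringDegreeF.zero : TuringDegreeF := TuringDegreeF.deg fun _ => 0

/-- A partial function is computable in a Turing degree if it is recursive in some
(equivalently, any) representative of that degree. -/
def TuringDegreeF.ComputableIn (d : TuringDegreeF) (f : ℕ →. ℕ) : Prop :=
  Quotient.liftOn d (fun g => RecursiveInO g f)
    (fun _ _ h => propext ⟨fun hr => hr.trans' h.1, fun hr => hr.trans' h.2⟩)

open Classical in
/-- The characteristic function of a set of naturals. -/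
noncomputable def charFun (A : Set ℕ) : ℕ → ℕ := fun n => if n ∈ A then 1 else 0

/-- Turing reducibility between sets of naturals. -/
noncomputable def SetTuringReducible (A B : Set ℕ) : Prop :=
  TuringReducibleF (charFun A) (charFun B)

/-- The Turing degree of a set of naturals. -/
noncomputable def TuringDegreeF.degSet (A : Set ℕ) : TuringDegreeF :=
  TuringDegreeF.deg (charFun A)

/-- `R` is `d`-computably reducible to `S`. -/
def ReducibleIn (d : TuringDegreeF) (R S : ℕ → ℕ → Prop) : Prop :=
  ∃ f : ℕ → ℕ, d.ComputableIn ↑f ∧ ∀ x y, R x y ↔ S (f x) (f y)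

/-- The reducibility spectrum of the pair `(R, S)`. -/
def SpecRed (R S : ℕ → ℕ → Prop) : Set TuringDegreeF := {d | ReducibleIn d R S}

/-- The bi-reducibility spectrum of the pair `(R, S)`. -/
def SpecBired (R S : ℕ → ℕ → Prop) : Set TuringDegreeF :=
  {d | ReducibleIn d R S ∧ ReducibleIn d S R}

/-- The equivalence relation generated by a set `A`: two numbers are equivalent
iff they are equal or both belong to `A`. -/
def genRel (A : Set ℕ) : ℕ → ℕ → Prop := fun x y => x = y ∨ (x ∈ A ∧ y ∈ A)

/-- A ceer: an equivalence relation whose set of pairs is computably enumerable. -/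
def Ceer (R : ℕ → ℕ → Prop) : Prop :=
  Equivalence R ∧ REPred fun p : ℕ × ℕ => R p.1 p.2

/-- A computably enumerable set of naturals. -/
def CePred (A : Set ℕ) : Prop := REPred (· ∈ A)

/-- A partial transversal of `R`: a set any two distinct elements of which are
`R`-inequivalent. -/
def PartialTransversal (R : ℕ → ℕ → Prop) (A : Set ℕ) : Prop :=
  ∀ x ∈ A, ∀ y ∈ A, x ≠ y → ¬R x y

/-- An introreducible set: an infinite set computable from each of its infinite subsets. -/
def Introreducible (B : Set ℕ) : Prop :=
  B.Infinite ∧ ∀ C : Set ℕ, C ⊆ B → C.Infinite → SetTuringReducible B C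


/-!
Enumerate `B` as `φ 0, φ 1, …` and pick representatives `G i` of the degrees `φ i`. Take `R` to
be equality, and let `S` identify all numbers that are not certificates, where the certificate
for `(i, n)` codes `i`, the first `n` values of `G i` and the first `i` values of `G 0`.
If `G i` is computable in `d`, then `n ↦ certificate i n` is a `d`-computable reduction.
Conversely, a reduction `f` is injective and all but at most one of its values are
certificates, so infinitely many pairs `(i, n)` occur. Either one index `i` occurs with
arbitrarily large `n`, and searching through the values of `f` computes `G i`, or the indices
are unbounded, and the prefixes of `G 0` compute `G 0`.
-/

open Encodable

theorem List.getD_map_range {α : Type*} {g : ℕ → α} {d : α} {m n : ℕ} (h : m < n) :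
    ((List.range n).map g).getD m d = g m := by
  simp [List.getD_eq_getElem?_getD, h]

theorem Set.Infinite.exists_unbounded_fiber_or_unbounded_fst {α : Type*} {s : Set α}
    (hs : s.Infinite) {p : α → ℕ × ℕ} (hp : s.InjOn p) :
    (∃ i, ∀ m, ∃ k ∈ s, (p k).1 = i ∧ m < (p k).2) ∨ ∀ m, ∃ k ∈ s, m < (p k).1 := by
  by_contra! h
  obtain ⟨hfiber, m₀, hfst⟩ := h
  choose M hM using hfiber
  have hbox : p '' s ⊆ ⋃ i ∈ Set.Iic m₀, {i} ×ˢ Set.Iic (M i) := by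
    rintro _ ⟨k, hk, rfl⟩
    exact Set.mem_biUnion (hfst k hk) ⟨rfl, hM _ k hk rfl⟩
  refine hs (Set.Finite.of_finite_image (Set.Finite.subset ?_ hbox) hp)
  exact (Set.finite_Iic m₀).biUnion fun i _ => (Set.finite_singleton i).prod (Set.finite_Iic _)

namespace RecursiveInO

variable {O : ℕ → ℕ}

theorem of_partrec {f : ℕ →. ℕ} (h : Nat.Partrec f) : RecursiveInO O f := by
  induction h with
  | zero => exact .zero
  | succ => exact .succ
  | left => exact .left
  | right => exact .right
  | pair _ _ ih₁ ih₂ => exact .pair ih₁ ih₂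
  | comp _ _ ih₁ ih₂ => exact .comp ih₁ ih₂
  | prec _ _ ih₁ ih₂ => exact .prec ih₁ ih₂
  | rfind _ ih => exact .rfind ih

theorem of_computable {f : ℕ → ℕ} (h : Computable f) : RecursiveInO O ↑f :=
  of_partrec (Partrec.nat_iff.1 h)

theorem of_eq {f g : ℕ →. ℕ} (hf : RecursiveInO O f) (H : ∀ n, f n = g n) :
    RecursiveInO O g :=
  funext H ▸ hf

theorem comp' {f g : ℕ → ℕ} (hf : RecursiveInO O ↑f) (hg : RecursiveInO O ↑g) :
    RecursiveInO O ↑(fun n => f (g n)) :=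
  (RecursiveInO.comp hf hg).of_eq fun _ => Part.bind_some _ _

theorem pair' {f g : ℕ → ℕ} (hf : RecursiveInO O ↑f) (hg : RecursiveInO O ↑g) :
    RecursiveInO O ↑(fun n => Nat.pair (f n) (g n)) :=
  (RecursiveInO.pair hf hg).of_eq fun n => by simp [PFun.coe_val, Seq.seq]

theorem comp₂ {h : ℕ → ℕ → ℕ} (hh : Computable₂ h) {f g : ℕ → ℕ}
    (hf : RecursiveInO O ↑f) (hg : RecursiveInO O ↑g) :
    RecursiveInO O ↑(fun n => h (f n) (g n)) := by
  have hh' : Computable fun w : ℕ => h w.unpair.1 w.unpair.2 :=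
    hh.comp (Computable.fst.comp Computable.unpair) (Computable.snd.comp Computable.unpair)
  simpa using (of_computable hh').comp' (pair' hf hg)

theorem nat_rec {s : ℕ → ℕ → ℕ} (hs : RecursiveInO O ↑(fun w : ℕ => s w.unpair.1 w.unpair.2))
    (a : ℕ) : RecursiveInO O ↑(fun n => Nat.rec (motive := fun _ => ℕ) a s n) := by
  have hstep : RecursiveInO O ↑(fun w : ℕ => s w.unpair.2.unpair.1 w.unpair.2.unpair.2) :=
    hs.comp' (of_computable (Computable.snd.comp Computable.unpair))
  have hprec := RecursiveInO.prec (of_computable (Computable.const a)) hstep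
  refine (hprec.comp (of_computable (f := Nat.pair 0) (Primrec₂.natPair.comp
    (Primrec.const 0) Primrec.id).to_comp)).of_eq fun n => ?_
  simp only [PFun.coe_val, Part.bind_eq_bind, Part.bind_some, Nat.unpaired, Nat.unpair_pair]
  induction n with
  | zero => rfl
  | succ n ih =>
    show (Nat.rec _ _ n : Part ℕ) >>= _ = _
    rw [ih]
    simp

theorem find {p : ℕ → ℕ → Prop} [DecidableRel p]
    (hp : RecursiveInO O ↑(fun w : ℕ => (if p w.unpair.1 w.unpair.2 then 0 else 1 : ℕ)))
    (hex : ∀ a, ∃ k, p a k) : RecursiveInO O ↑(fun a => Nat.find (hex a)) := by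
  refine (RecursiveInO.rfind hp).of_eq fun a => ?_
  refine (Part.eq_some_iff.2 (Nat.mem_rfind.2 ⟨?_, fun hm => ?_⟩))
  · simp [PFun.coe_val, Nat.find_spec (hex a)]
  · simpa [PFun.coe_val] using Nat.find_min (hex a) hm

theorem encode_map_range {g : ℕ → ℕ} (hg : RecursiveInO O ↑g) :
    RecursiveInO O ↑(fun n => encode ((List.range n).map g)) := by
  let snoc (c v : ℕ) : ℕ := encode ((decode c : Option (List ℕ)).getD [] ++ [v])
  have hsnoc : Computable₂ snoc := Primrec₂.to_comp <| Primrec.encode.comp <|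
    Primrec.list_concat.comp (Primrec.option_getD.comp (Primrec.decode.comp Primrec.fst)
      (Primrec.const [])) Primrec.snd
  have hstep : RecursiveInO O ↑(fun w : ℕ => snoc w.unpair.2 (g w.unpair.1)) :=
    comp₂ hsnoc (of_computable (Computable.snd.comp Computable.unpair))
      (hg.comp' (of_computable (Computable.fst.comp Computable.unpair)))
  refine (nat_rec (s := fun y c => snoc c (g y)) hstep 0).of_eq fun n => ?_
  simp only [PFun.coe_val, Part.some_inj]
  induction n with
  | zero => rfl
  | succ n ih =>
    change snoc (Nat.rec _ _ n) (g n) = _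
    rw [ih]
    simp [snoc, List.range_succ]

theorem of_search {f g : ℕ → ℕ} (hf : RecursiveInO O ↑f) {P : ℕ → ℕ → Prop}
    (hP : PrimrecRel P) {read : ℕ → ℕ → ℕ} (hread : Primrec₂ read) (z : ℕ)
    (hex : ∀ m, ∃ k ≠ z, P m (f k)) (hread_eq : ∀ m k, k ≠ z → P m (f k) → read m (f k) = g m) :
    RecursiveInO O ↑g := by
  classical
  let test (w v : ℕ) : ℕ := if w.unpair.2 ≠ z ∧ P w.unpair.1 v then 0 else 1
  have htest : Computable₂ test := Primrec₂.to_comp <| Primrec.ite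
    (PrimrecPred.and
      (PrimrecPred.not (Primrec.eq.comp (Primrec.snd.comp (Primrec.unpair.comp Primrec.fst))
        (Primrec.const z)))
      (hP.comp (Primrec.fst.comp (Primrec.unpair.comp Primrec.fst)) Primrec.snd))
    (Primrec.const 0) (Primrec.const 1)
  have hK := find (comp₂ htest (of_computable Computable.id)
    (hf.comp' (of_computable (Computable.snd.comp Computable.unpair)))) hex
  refine (comp₂ hread.to_comp (of_computable Computable.id) (hf.comp' hK)).of_eq fun m => ?_
  obtain ⟨hk, hPk⟩ := Nat.find_spec (hex m)
  simp [hread_eq m _ hk hPk]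

end RecursiveInO

theorem equivalence_genRel (A : Set ℕ) : Equivalence (genRel A) where
  refl _ := Or.inl rfl
  symm := by
    rintro x y (rfl | ⟨hx, hy⟩)
    exacts [Or.inl rfl, Or.inr ⟨hy, hx⟩]
  trans := by
    rintro x y w (rfl | ⟨hx, hy⟩) (rfl | ⟨hy', hw⟩)
    exacts [Or.inl rfl, Or.inr ⟨hy', hw⟩, Or.inr ⟨hx, hy⟩, Or.inr ⟨hx, hw⟩]

section ReductionToGenRel

variable {A : Set ℕ} {f : ℕ → ℕ}

theorem injective_of_eq_iff_genRel (hf : ∀ x y, x = y ↔ genRel A (f x) (f y)) :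
    Function.Injective f :=
  fun x y hxy => (hf x y).2 (Or.inl hxy)

theorem exists_forall_ne_mem_of_eq_iff_genRel_compl
    (hf : ∀ x y, x = y ↔ genRel Aᶜ (f x) (f y)) : ∃ z, ∀ k ≠ z, f k ∈ A := by
  by_cases h : ∃ z, f z ∉ A
  · obtain ⟨z, hz⟩ := h
    exact ⟨z, fun k hk => by_contra fun hfk => hk ((hf k z).2 (Or.inr ⟨hfk, hz⟩))⟩
  · simp only [not_exists, not_not] at h
    exact ⟨0, fun k _ => h k⟩

end ReductionToGenRel

section Certificates

variable (G : ℕ → ℕ → ℕ)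

def certificate (i n : ℕ) : ℕ :=
  encode (i, (List.range n).map (G i), (List.range i).map (G 0))

def certificates : Set ℕ := {c | ∃ i n, certificate G i n = c}

def decodeCertificate (c : ℕ) : ℕ × List ℕ × List ℕ := (decode c).getD default

theorem primrec_decodeCertificate : Primrec decodeCertificate :=
  Primrec.option_getD_default.comp Primrec.decode

variable {G}

@[simp]
theorem decodeCertificate_certificate (i n : ℕ) :
    decodeCertificate (certificate G i n) =
      (i, (List.range n).map (G i), (List.range i).map (G 0)) := by
  simp [decodeCertificate, certificate]

theorem certificate_injective (i : ℕ) : Function.Injective (certificate G i) := fun n n' h => by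
  simpa using congrArg (fun c => (decodeCertificate c).2.1.length) h

variable {O : ℕ → ℕ}

theorem recursiveIn_certificate {i : ℕ} (hG : RecursiveInO O ↑(G i)) :
    RecursiveInO O ↑(certificate G i) :=
  have hprefix := RecursiveInO.of_computable (O := O)
    (Computable.const (encode ((List.range i).map (G 0))))
  (RecursiveInO.pair' (RecursiveInO.of_computable (Computable.const i))
    (RecursiveInO.pair' (RecursiveInO.encode_map_range hG) hprefix)).of_eq fun _ => by
    simp [certificate, encode_prod_val]

theorem eq_iff_genRel_compl_certificates (i x y : ℕ) :
    x = y ↔ genRel (certificates G)ᶜ (certificate G i x) (certificate G i y) := by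
  refine ⟨fun hxy => Or.inl (congrArg _ hxy), ?_⟩
  rintro (hxy | ⟨hx, -⟩)
  exacts [certificate_injective i hxy, absurd ⟨i, x, rfl⟩ hx]

theorem recursiveIn_of_long_certificates {f : ℕ → ℕ} (hf : RecursiveInO O ↑f) {z i : ℕ}
    (hcert : ∀ k ≠ z, f k ∈ certificates G)
    (hlong : ∀ m, ∃ k ≠ z, (decodeCertificate (f k)).1 = i ∧
      m < (decodeCertificate (f k)).2.1.length) :
    RecursiveInO O ↑(G i) := by
  refine hf.of_search
    (P := fun m c => (decodeCertificate c).1 = i ∧ m < (decodeCertificate c).2.1.length) ?_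
    (read := fun m c => (decodeCertificate c).2.1.getD m 0) ?_ z hlong ?_
  · exact PrimrecPred.and
      (Primrec.eq.comp (Primrec.fst.comp (primrec_decodeCertificate.comp Primrec.snd))
        (Primrec.const i))
      (Primrec.nat_lt.comp Primrec.fst (Primrec.list_length.comp
        (Primrec.fst.comp (Primrec.snd.comp (primrec_decodeCertificate.comp Primrec.snd)))))
  · exact (Primrec.list_getD 0).comp
      (Primrec.fst.comp (Primrec.snd.comp (primrec_decodeCertificate.comp Primrec.snd)))
      Primrec.fst
  · rintro m k hk ⟨hi, hm⟩
    obtain ⟨i', n, hc⟩ := hcert k hk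
    rw [← hc] at hi hm ⊢
    simp only [decodeCertificate_certificate] at hi hm ⊢
    subst hi
    exact List.getD_map_range (by simpa using hm)

theorem recursiveIn_zero_of_large_certificate_indices {f : ℕ → ℕ} (hf : RecursiveInO O ↑f)
    {z : ℕ} (hcert : ∀ k ≠ z, f k ∈ certificates G)
    (hlarge : ∀ m, ∃ k ≠ z, m < (decodeCertificate (f k)).1) :
    RecursiveInO O ↑(G 0) := by
  refine hf.of_search (P := fun m c => m < (decodeCertificate c).1) ?_
    (read := fun m c => (decodeCertificate c).2.2.getD m 0) ?_ z hlarge ?_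
  · exact Primrec.nat_lt.comp Primrec.fst
      (Primrec.fst.comp (primrec_decodeCertificate.comp Primrec.snd))
  · exact (Primrec.list_getD 0).comp
      (Primrec.snd.comp (Primrec.snd.comp (primrec_decodeCertificate.comp Primrec.snd)))
      Primrec.fst
  · rintro m k hk hm
    obtain ⟨i, n, hc⟩ := hcert k hk
    rw [← hc] at hm ⊢
    simp only [decodeCertificate_certificate] at hm ⊢
    exact List.getD_map_range hm

end Certificates

theorem exists_recursiveIn_of_eq_iff_genRel_certificates {G : ℕ → ℕ → ℕ} {O f : ℕ → ℕ}
    (hf : RecursiveInO O ↑f) (hred : ∀ x y, x = y ↔ genRel (certificates G)ᶜ (f x) (f y)) :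
    ∃ i, RecursiveInO O ↑(G i) := by
  obtain ⟨z, hcert⟩ := exists_forall_ne_mem_of_eq_iff_genRel_compl hred
  let p (k : ℕ) : ℕ × ℕ := ((decodeCertificate (f k)).1, (decodeCertificate (f k)).2.1.length)
  have hp : ({z}ᶜ : Set ℕ).InjOn p := by
    intro k hk k' hk' hkk'
    obtain ⟨i, n, hc⟩ := hcert k hk
    obtain ⟨i', n', hc'⟩ := hcert k' hk'
    simp only [p, ← hc, ← hc', decodeCertificate_certificate, List.length_map, List.length_range,
      Prod.mk.injEq] at hkk'
    obtain ⟨rfl, rfl⟩ := hkk'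
    exact injective_of_eq_iff_genRel hred (hc.symm.trans hc')
  rcases (Set.finite_singleton z).infinite_compl.exists_unbounded_fiber_or_unbounded_fst hp with
    ⟨i, hlong⟩ | hlarge
  · exact ⟨i, recursiveIn_of_long_certificates hf hcert hlong⟩
  · exact ⟨0, recursiveIn_zero_of_large_certificate_indices hf hcert hlarge⟩

theorem TuringDegreeF.le_deg_iff (d : TuringDegreeF) (O : ℕ → ℕ) :
    d ≤ TuringDegreeF.deg O ↔ TuringReducibleF (Quotient.out d) O := by
  conv_lhs => rw [← Quotient.out_eq d]
  rfl

theorem stmt_6_general (B : Set TuringDegreeF) (hne : B.Nonempty) (hcnt : B.Countable) :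
    ∃ R S : ℕ → ℕ → Prop, Equivalence R ∧ Equivalence S ∧
      SpecRed R S = {d | ∃ b ∈ B, b ≤ d} := by
  obtain ⟨φ, rfl⟩ := hcnt.exists_eq_range hne
  let G (i : ℕ) : ℕ → ℕ := Quotient.out (φ i)
  refine ⟨Eq, genRel (certificates G)ᶜ, eq_equivalence, equivalence_genRel _, ?_⟩
  ext d
  induction d using Quotient.inductionOn with | h O =>
  constructor
  · rintro ⟨f, hf, hred⟩
    obtain ⟨i, hi⟩ := exists_recursiveIn_of_eq_iff_genRel_certificates hf hred
    exact ⟨φ i, ⟨i, rfl⟩, (TuringDegreeF.le_deg_iff _ O).2 hi⟩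
  · rintro ⟨_, ⟨i, rfl⟩, hi⟩
    exact ⟨certificate G i, recursiveIn_certificate ((TuringDegreeF.le_deg_iff _ O).1 hi),
      eq_iff_genRel_compl_certificates i⟩

/-- Every upward closed collection of Turing degrees with a
countable basis is realised as a reducibility spectrum. -/
theorem stmt_6 (B : Set TuringDegreeF) (hne : B.Nonempty) (hcnt : B.Countable)
    (hinc : ∀ b ∈ B, ∀ b' ∈ B, b ≠ b' → ¬b ≤ b' ∧ ¬b' ≤ b) :
    ∃ R S : ℕ → ℕ → Prop, Equivalence R ∧ Equivalence S ∧
      SpecRed R S = {d | ∃ b ∈ B, b ≤ d} :=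
  stmt_6_general B hne hcnt
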